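/- arXiv:1610.03538 — 2 statements merged into one kernel-verified Lean document; each statement's English description precedes it below -/
import Mathlib

section
/- No-loss condition (Theorem on precision loss, equality case H_B = H_A): Let H be a finite-dimensional complex inner product space, ψ ∈ H a unit vector, ψ' ∈ H with Re⟨ψ, ψ'⟩ = 0, and (P_i)_{i∈ι} a finite family of self-adjoint idempotent operators on H with P_i P_j = 0 for i ≠ j and ∑_i P_i = id; set p_i := ⟨ψ, P_i ψ⟩. Then Bob's quantum Fisher information H_B := 4‖ψ'‖² − 4 ∑_{i : p_i > 0} (Im⟨ψ, P_i ψ'⟩)² / p_i equals Alice's quantum Fisher information H_A := 4(‖ψ'‖² − |⟨ψ, ψ'⟩|²) if and only if for every i, Im⟨ψ, P_i ψ'⟩ = p_i · Im⟨ψ, ψ'⟩ (equivalently, Im⟨ψ, P_i ψ'⟩ = −i ⟨ψ, P_i ψ⟩ ⟨ψ, ψ'⟩, since ⟨ψ, ψ'⟩ is purely imaginary). -/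
/-!
Put `p i = ⟪ψ, P i ψ⟫`, `a i = Im ⟪ψ, P i ψ'⟫` and `m = Im ⟪ψ, ψ'⟫`. Since the `P i` are orthogonal
projections summing to the identity, `p` is a probability vector with `p i = ‖P i ψ‖²`, `a i`
vanishes wherever `p i` does, `∑ a i = m`, and `|⟪ψ, ψ'⟫|² = m²` because `Re ⟪ψ, ψ'⟫ = 0`.
So `H_B = H_A` says `∑ a i² / p i = m²`, and completing the square gives
`∑ a i² / p i - m² = ∑ (a i - p i m)² / p i`, a sum of nonnegative terms.
-/

open Finset
open scoped InnerProductSpace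

lemma ite_sq_div_nonneg (p b : ℝ) : 0 ≤ if 0 < p then b ^ 2 / p else 0 := by
  split_ifs
  · positivity
  · exact le_rfl

lemma ite_sq_div_eq_zero_iff {p b : ℝ} (hp : 0 ≤ p) :
    (if 0 < p then b ^ 2 / p else 0) = 0 ↔ b = 0 ∨ p = 0 := by
  rcases hp.lt_or_eq with hp | hp
  · simp [hp, hp.ne']
  · simp [← hp]

lemma ite_sq_div_sub_eq {p a : ℝ} (m : ℝ) (hp : 0 ≤ p) (ha : p = 0 → a = 0) :
    (if 0 < p then a ^ 2 / p else 0) - 2 * m * a + m ^ 2 * p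
      = if 0 < p then (a - p * m) ^ 2 / p else 0 := by
  rcases hp.lt_or_eq with hp | hp
  · simp only [hp, if_true]
    field_simp
    ring
  · simp [← hp, ha hp.symm]

theorem sum_ite_sq_div_eq_sq_iff {ι : Type*} [Fintype ι] {p a : ι → ℝ} {m : ℝ}
    (hp : ∀ i, 0 ≤ p i) (ha : ∀ i, p i = 0 → a i = 0)
    (hp_sum : ∑ i, p i = 1) (ha_sum : ∑ i, a i = m) :
    (∑ i, if 0 < p i then a i ^ 2 / p i else 0) = m ^ 2 ↔ ∀ i, a i = p i * m := by
  have hsum : (∑ i, if 0 < p i then a i ^ 2 / p i else 0) - m ^ 2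
      = ∑ i, if 0 < p i then (a i - p i * m) ^ 2 / p i else 0 := by
    rw [sum_congr rfl fun i _ => (ite_sq_div_sub_eq m (hp i) (ha i)).symm, sum_add_distrib,
      sum_sub_distrib, ← mul_sum, ← mul_sum, ha_sum, hp_sum]
    ring
  rw [← sub_eq_zero, hsum, sum_eq_zero_iff_of_nonneg fun i _ => ite_sq_div_nonneg _ _]
  refine forall_congr' fun i => ?_
  rw [ite_sq_div_eq_zero_iff (hp i), sub_eq_zero]
  simp only [mem_univ, true_implies]
  constructor
  · rintro (h | h)
    · exact h
    · simp [h, ha i h]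
  · exact Or.inl

namespace IsStarProjection

variable {𝕜 E : Type*} [RCLike 𝕜] [NormedAddCommGroup E] [InnerProductSpace 𝕜 E] [CompleteSpace E]
  {T : E →L[𝕜] E}

lemma inner_apply_self (hT : IsStarProjection T) (x : E) : ⟪x, T x⟫_𝕜 = ‖T x‖ ^ 2 := by
  have hidem : T (T x) = T x := DFunLike.congr_fun hT.isIdempotentElem.eq x
  have hsymm : ⟪T x, T x⟫_𝕜 = ⟪x, T (T x)⟫_𝕜 := hT.isSelfAdjoint.isSymmetric x (T x)
  rw [← inner_self_eq_norm_sq_to_K, hsymm, hidem]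

lemma re_inner_apply_self (hT : IsStarProjection T) (x : E) :
    RCLike.re ⟪x, T x⟫_𝕜 = ‖T x‖ ^ 2 := by
  rw [hT.inner_apply_self]
  norm_cast

lemma inner_apply_eq_zero_of_re_inner_apply_self_eq_zero (hT : IsStarProjection T) {x : E}
    (hx : RCLike.re ⟪x, T x⟫_𝕜 = 0) (y : E) : ⟪x, T y⟫_𝕜 = 0 := by
  rw [hT.re_inner_apply_self, sq_eq_zero_iff, norm_eq_zero] at hx
  have hsymm : ⟪T x, y⟫_𝕜 = ⟪x, T y⟫_𝕜 := hT.isSelfAdjoint.isSymmetric x y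
  rw [← hsymm, hx, inner_zero_left]

end IsStarProjection

lemma sum_inner_apply_eq_inner {𝕜 E ι : Type*} [RCLike 𝕜] [NormedAddCommGroup E]
    [InnerProductSpace 𝕜 E] [Fintype ι] {P : ι → E →L[𝕜] E} (hP : ∑ i, P i = 1) (x y : E) :
    ∑ i, ⟪x, P i y⟫_𝕜 = ⟪x, y⟫_𝕜 := by
  rw [← inner_sum, ← _root_.sum_apply, hP, one_apply_eq_self]

theorem qrf_no_loss_iff_general
    {H : Type*} [NormedAddCommGroup H] [InnerProductSpace ℂ H] [FiniteDimensional ℂ H]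
    {ι : Type*} [Fintype ι]
    (ψ ψ' : H) (hψ : ‖ψ‖ = 1)
    (hre : ((inner ℂ ψ ψ' : ℂ)).re = 0)
    (P : ι → H →L[ℂ] H)
    (hsa : ∀ i, IsSelfAdjoint (P i))
    (hidem : ∀ i, P i * P i = P i)
    (hsum : ∑ i, P i = 1) :
    (4 * ‖ψ'‖ ^ 2
        - 4 * ∑ i, (if 0 < ((inner ℂ ψ (P i ψ) : ℂ)).re
            then ((inner ℂ ψ (P i ψ') : ℂ)).im ^ 2 / ((inner ℂ ψ (P i ψ) : ℂ)).re else 0)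
      = 4 * (‖ψ'‖ ^ 2 - ‖(inner ℂ ψ ψ' : ℂ)‖ ^ 2))
    ↔ ∀ i, ((inner ℂ ψ (P i ψ') : ℂ)).im
        = ((inner ℂ ψ (P i ψ) : ℂ)).re * ((inner ℂ ψ ψ' : ℂ)).im := by
  have hP i : IsStarProjection (P i) := ⟨hidem i, hsa i⟩
  have hp_nonneg i : 0 ≤ (⟪ψ, P i ψ⟫_ℂ).re := by
    rw [← RCLike.re_to_complex, (hP i).re_inner_apply_self]
    positivity
  have ha_zero i (hpi : (⟪ψ, P i ψ⟫_ℂ).re = 0) : (⟪ψ, P i ψ'⟫_ℂ).im = 0 := by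
    rw [(hP i).inner_apply_eq_zero_of_re_inner_apply_self_eq_zero hpi, Complex.zero_im]
  have hp_sum : ∑ i, (⟪ψ, P i ψ⟫_ℂ).re = 1 := by
    rw [← Complex.re_sum, sum_inner_apply_eq_inner hsum, inner_self_eq_norm_sq_to_K, hψ]
    norm_num
  have ha_sum : ∑ i, (⟪ψ, P i ψ'⟫_ℂ).im = (⟪ψ, ψ'⟫_ℂ).im := by
    rw [← Complex.im_sum, sum_inner_apply_eq_inner hsum]
  rw [Complex.sq_norm, Complex.normSq_apply, hre,
    ← sum_ite_sq_div_eq_sq_iff hp_nonneg ha_zero hp_sum ha_sum]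
  constructor <;> intro h <;> linarith

/-- No-loss condition: Bob's quantum Fisher information equals Alice's if and
only if `Im⟨ψ, P_i ψ'⟩ = p_i · Im⟨ψ, ψ'⟩` for every `i`. -/
theorem qrf_no_loss_iff
    {H : Type*} [NormedAddCommGroup H] [InnerProductSpace ℂ H] [FiniteDimensional ℂ H]
    {ι : Type*} [Fintype ι]
    (ψ ψ' : H) (hψ : ‖ψ‖ = 1)
    (hre : ((inner ℂ ψ ψ' : ℂ)).re = 0)
    (P : ι → H →L[ℂ] H)
    (hsa : ∀ i, IsSelfAdjoint (P i))
    (hidem : ∀ i, P i * P i = P i)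
    (horth : ∀ i j, i ≠ j → P i * P j = 0)
    (hsum : ∑ i, P i = 1) :
    (4 * ‖ψ'‖ ^ 2
        - 4 * ∑ i, (if 0 < ((inner ℂ ψ (P i ψ) : ℂ)).re
            then ((inner ℂ ψ (P i ψ') : ℂ)).im ^ 2 / ((inner ℂ ψ (P i ψ) : ℂ)).re else 0)
      = 4 * (‖ψ'‖ ^ 2 - ‖(inner ℂ ψ ψ' : ℂ)‖ ^ 2))
    ↔ ∀ i, ((inner ℂ ψ (P i ψ') : ℂ)).im
        = ((inner ℂ ψ (P i ψ) : ℂ)).re * ((inner ℂ ψ ψ' : ℂ)).im :=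
  qrf_no_loss_iff_general ψ ψ' hψ hre P hsa hidem hsum
end

section
/- Maximum-loss condition (Theorem on precision loss, equality case H_B = 0): Let H be a finite-dimensional complex inner product space, ψ ∈ H a unit vector, ψ' ∈ H, and (P_i)_{i∈ι} a finite family of self-adjoint idempotent operators on H with P_i P_j = 0 for i ≠ j and ∑_i P_i = id; set p_i := ⟨ψ, P_i ψ⟩. Then Bob's quantum Fisher information H_B := 4‖ψ'‖² − 4 ∑_{i : p_i > 0} (Im⟨ψ, P_i ψ'⟩)² / p_i vanishes if and only if for every i, Re⟨ψ, P_i ψ'⟩ = 0 and there exists c_i ∈ ℂ with P_i ψ' = c_i · P_i ψ (the latter condition is equivalent to the paper's requirement that ψ' be orthogonal to every vector φ_j completing the family {P_i ψ / √p_i} to an orthonormal basis). -/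
/-!
Write `p_i = ⟪ψ, P_i ψ⟫`. Since the `P_i` are orthogonal projections summing to the identity,
`⟪ψ, P_i ψ'⟫ = ⟪P_i ψ, P_i ψ'⟫`, `p_i = ‖P_i ψ‖²` and `‖ψ'‖² = ∑ ‖P_i ψ'‖²`. Hence `H_B / 4` is a
sum of the nonnegative Cauchy–Schwarz defects `‖P_i ψ'‖² - (Im⟪P_i ψ, P_i ψ'⟫)² / ‖P_i ψ‖²`, and it
vanishes iff each defect does, i.e. iff `Re⟪P_i ψ, P_i ψ'⟫ = 0` and Cauchy–Schwarz is an equality.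
-/

open scoped InnerProductSpace

section CauchySchwarz

variable {E : Type*} [NormedAddCommGroup E] [InnerProductSpace ℂ E]

lemma im_inner_sq_le_norm_sq_mul_norm_sq (a b : E) :
    (⟪a, b⟫_ℂ).im ^ 2 ≤ ‖a‖ ^ 2 * ‖b‖ ^ 2 :=
  calc (⟪a, b⟫_ℂ).im ^ 2 ≤ ‖⟪a, b⟫_ℂ‖ ^ 2 :=
        sq_le_sq.mpr (by simpa using Complex.abs_im_le_norm _)
    _ ≤ (‖a‖ * ‖b‖) ^ 2 := pow_le_pow_left₀ (norm_nonneg _) (norm_inner_le_norm a b) 2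
    _ = ‖a‖ ^ 2 * ‖b‖ ^ 2 := mul_pow _ _ _

lemma im_inner_sq_div_norm_sq_le (a b : E) : (⟪a, b⟫_ℂ).im ^ 2 / ‖a‖ ^ 2 ≤ ‖b‖ ^ 2 := by
  rcases eq_or_ne a 0 with rfl | ha
  · simp
  · rw [div_le_iff₀ (by positivity), mul_comm]
    exact im_inner_sq_le_norm_sq_mul_norm_sq a b

/-- `|Im⟪a, b⟫| = ‖a‖ ‖b‖` forces both `Re⟪a, b⟫ = 0` and equality in Cauchy–Schwarz.
For `a = 0` both sides say `b = 0`, thanks to `x / 0 = 0`. -/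
lemma im_inner_sq_div_norm_sq_eq_iff (a b : E) :
    (⟪a, b⟫_ℂ).im ^ 2 / ‖a‖ ^ 2 = ‖b‖ ^ 2 ↔ (⟪a, b⟫_ℂ).re = 0 ∧ ∃ c : ℂ, b = c • a := by
  rcases eq_or_ne a 0 with rfl | ha
  · simp [eq_comm (a := (0 : ℝ))]
  have hcs := norm_inner_le_norm (𝕜 := ℂ) a b
  have hsq : ‖⟪a, b⟫_ℂ‖ ^ 2 = (⟪a, b⟫_ℂ).re ^ 2 + (⟪a, b⟫_ℂ).im ^ 2 := by
    rw [Complex.sq_norm, Complex.normSq_apply]; ring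
  have hcs_eq : ‖⟪a, b⟫_ℂ‖ = ‖a‖ * ‖b‖ ↔ ∃ c : ℂ, b = c • a :=
    ((norm_inner_eq_norm_tfae ℂ a b).out 0 2).trans (or_iff_right ha)
  rw [div_eq_iff (by positivity), ← hcs_eq]
  constructor
  · intro h
    have hre : (⟪a, b⟫_ℂ).re = 0 := by
      nlinarith [sq_nonneg (⟪a, b⟫_ℂ).re, norm_nonneg ⟪a, b⟫_ℂ, norm_nonneg a, norm_nonneg b]
    refine ⟨hre, (pow_left_inj₀ (norm_nonneg _) (by positivity) two_ne_zero).mp ?_⟩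
    rw [hsq, hre, h]; ring
  · rintro ⟨hre, h⟩
    rw [h, hre] at hsq
    linear_combination -hsq

end CauchySchwarz

section StarProjection

variable {𝕜 E : Type*} [RCLike 𝕜] [NormedAddCommGroup E] [InnerProductSpace 𝕜 E] [CompleteSpace E]

lemma IsStarProjection.inner_apply_right {P : E →L[𝕜] E} (hP : IsStarProjection P) (x y : E) :
    ⟪x, P y⟫_𝕜 = ⟪P x, P y⟫_𝕜 := by
  conv_lhs => rw [← hP.isIdempotentElem.eq]
  rw [mul_apply_eq_comp, ← ContinuousLinearMap.adjoint_inner_left,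
    hP.isSelfAdjoint.adjoint_eq]

lemma IsStarProjection.re_inner_apply_self_s7 {P : E →L[𝕜] E} (hP : IsStarProjection P) (x : E) :
    RCLike.re ⟪x, P x⟫_𝕜 = ‖P x‖ ^ 2 := by
  rw [hP.inner_apply_right, inner_self_eq_norm_sq]

lemma norm_sq_eq_sum_norm_sq_of_sum_eq_one {ι : Type*} [Fintype ι] {P : ι → E →L[𝕜] E}
    (hP : ∀ i, IsStarProjection (P i)) (hsum : ∑ i, P i = 1) (x : E) :
    ‖x‖ ^ 2 = ∑ i, ‖P i x‖ ^ 2 := by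
  calc ‖x‖ ^ 2 = RCLike.re ⟪x, (∑ i, P i) x⟫_𝕜 := by
        rw [hsum, one_apply_eq_self, inner_self_eq_norm_sq]
    _ = ∑ i, ‖P i x‖ ^ 2 := by
      simp only [sum_apply, inner_sum, map_sum, (hP _).re_inner_apply_self_s7]

end StarProjection

lemma ite_pos_div_eq_div {p x : ℝ} (hp : 0 ≤ p) : (if 0 < p then x / p else 0) = x / p := by
  split_ifs with h
  · rfl
  · rw [le_antisymm (not_lt.mp h) hp, div_zero]

theorem qrf_max_loss_iff_general
    {H : Type*} [NormedAddCommGroup H] [InnerProductSpace ℂ H] [FiniteDimensional ℂ H]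
    {ι : Type*} [Fintype ι]
    (ψ ψ' : H)
    (P : ι → H →L[ℂ] H)
    (hsa : ∀ i, IsSelfAdjoint (P i))
    (hidem : ∀ i, P i * P i = P i)
    (hsum : ∑ i, P i = 1) :
    (4 * ‖ψ'‖ ^ 2
        - 4 * ∑ i, (if 0 < ((inner ℂ ψ (P i ψ) : ℂ)).re
            then ((inner ℂ ψ (P i ψ') : ℂ)).im ^ 2 / ((inner ℂ ψ (P i ψ) : ℂ)).re else 0)
      = 0)
    ↔ ∀ i, ((inner ℂ ψ (P i ψ') : ℂ)).re = 0 ∧ ∃ c : ℂ, P i ψ' = c • P i ψ := by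
  have hP : ∀ i, IsStarProjection (P i) := fun i => ⟨hidem i, hsa i⟩
  have hterm : ∀ i, (if 0 < ((inner ℂ ψ (P i ψ) : ℂ)).re
      then ((inner ℂ ψ (P i ψ') : ℂ)).im ^ 2 / ((inner ℂ ψ (P i ψ) : ℂ)).re else 0)
      = (⟪P i ψ, P i ψ'⟫_ℂ).im ^ 2 / ‖P i ψ‖ ^ 2 := fun i => by
    rw [← RCLike.re_to_complex, (hP i).re_inner_apply_self_s7, ite_pos_div_eq_div (by positivity),
      (hP i).inner_apply_right ψ ψ']
  rw [Finset.sum_congr rfl fun i _ => hterm i, norm_sq_eq_sum_norm_sq_of_sum_eq_one hP hsum ψ',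
    ← mul_sub, ← Finset.sum_sub_distrib, mul_eq_zero_iff_left four_ne_zero,
    Finset.sum_eq_zero_iff_of_nonneg fun i _ => sub_nonneg.2 (im_inner_sq_div_norm_sq_le _ _)]
  simp only [Finset.mem_univ, true_imp_iff]
  refine forall_congr' fun i => ?_
  rw [sub_eq_zero, eq_comm, im_inner_sq_div_norm_sq_eq_iff, (hP i).inner_apply_right ψ ψ']

/-- Maximum-loss condition: Bob's quantum Fisher information vanishes if and
only if `Re⟨ψ, P_i ψ'⟩ = 0` and `P_i ψ'` is a multiple of `P_i ψ` for every `i`. -/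
theorem qrf_max_loss_iff
    {H : Type*} [NormedAddCommGroup H] [InnerProductSpace ℂ H] [FiniteDimensional ℂ H]
    {ι : Type*} [Fintype ι]
    (ψ ψ' : H) (hψ : ‖ψ‖ = 1)
    (P : ι → H →L[ℂ] H)
    (hsa : ∀ i, IsSelfAdjoint (P i))
    (hidem : ∀ i, P i * P i = P i)
    (horth : ∀ i j, i ≠ j → P i * P j = 0)
    (hsum : ∑ i, P i = 1) :
    (4 * ‖ψ'‖ ^ 2
        - 4 * ∑ i, (if 0 < ((inner ℂ ψ (P i ψ) : ℂ)).re
            then ((inner ℂ ψ (P i ψ') : ℂ)).im ^ 2 / ((inner ℂ ψ (P i ψ) : ℂ)).re else 0)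
      = 0)
    ↔ ∀ i, ((inner ℂ ψ (P i ψ') : ℂ)).re = 0 ∧ ∃ c : ℂ, P i ψ' = c • P i ψ :=
  qrf_max_loss_iff_general ψ ψ' P hsa hidem hsum
end
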